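/- arXiv:2510.24588 — 2 statements merged into one kernel-verified Lean document; each statement's English description precedes it below -/
import Mathlib

section
/- Let G be a topological group and let S be a dense subgroup of G. Then for every natural number n, the n-th derived subgroup D^n(G) of G is contained in the topological closure of the image of the n-th derived subgroup D^n(S) of S in G. -/
open scoped commutatorElement

theorem Subgroup.commutator_topologicalClosure_le {G : Type*} [Group G] [TopologicalSpace G]
    [IsTopologicalGroup G] (H K : Subgroup G) :
    ⁅H.topologicalClosure, K.topologicalClosure⁆ ≤ ⁅H, K⁆.topologicalClosure :=
  Subgroup.commutator_le.2 fun _ hg _ hk =>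
    map_mem_closure₂ (f := fun g k : G => ⁅g, k⁆)
      (by simp only [commutatorElement_def]; fun_prop) hg hk
      fun _ ha _ hb => Subgroup.commutator_mem_commutator ha hb

/-- Let `G` be a topological group and `S` a dense subgroup of `G`. Then for every `n`,
the `n`-th derived subgroup `D^n(G)` of `G` is contained in the topological closure of
the image in `G` of the `n`-th derived subgroup `D^n(S)` of `S`. -/
theorem derivedSeries_le_closure_map_derivedSeries_of_dense
    {G : Type*} [Group G] [TopologicalSpace G] [IsTopologicalGroup G]
    (S : Subgroup G) (hS : Dense (S : Set G)) (n : ℕ) :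
    derivedSeries G n ≤ ((derivedSeries S n).map S.subtype).topologicalClosure := by
  induction n with
  | zero =>
    rw [derivedSeries_zero, derivedSeries_zero, ← MonoidHom.range_eq_map,
      Subgroup.range_subtype]
    exact fun x _ => hS x
  | succ n ih =>
    calc derivedSeries G (n + 1) = ⁅derivedSeries G n, derivedSeries G n⁆ := rfl
      _ ≤ ⁅((derivedSeries S n).map S.subtype).topologicalClosure,
            ((derivedSeries S n).map S.subtype).topologicalClosure⁆ :=
        Subgroup.commutator_mono ih ih
      _ ≤ ⁅(derivedSeries S n).map S.subtype,
            (derivedSeries S n).map S.subtype⁆.topologicalClosure :=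
        Subgroup.commutator_topologicalClosure_le _ _
      _ = ((derivedSeries S (n + 1)).map S.subtype).topologicalClosure := by
        rw [derivedSeries_succ, Subgroup.map_commutator]
end

section
/- Let K be a number field with algebraic closure K̄, let Γ = Gal(K̄/K) be its absolute Galois group equipped with the Krull topology, and let n be a natural number. For x ∈ K̄, the following are equivalent: (1) x is fixed by every element of the topological closure of the n-th derived subgroup D^n(Γ); (2) there exists a finite Galois intermediate field L of K̄/K containing x such that the derived series of Gal(L/K) reaches the trivial subgroup in n steps, i.e., D^n(Gal(L/K)) = 1. -/
open IntermediateField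

/-- Let `K` be a number field with algebraic closure `K̄`, and `Γ = Gal(K̄/K)` its absolute
Galois group with the Krull topology. For `x ∈ K̄`, the following are equivalent:
(1) `x` is fixed by every element of the topological closure of the `n`-th derived subgroup
`D^n(Γ)`; (2) there is a finite Galois intermediate field `L` of `K̄/K` containing `x` such
that `D^n(Gal(L/K)) = 1`. -/
theorem fixed_by_closure_derivedSeries_iff_mem_nSolvable
    (K : Type*) [Field K] [NumberField K] (n : ℕ) (x : AlgebraicClosure K) :
    (∀ σ ∈ (derivedSeries (AlgebraicClosure K ≃ₐ[K] AlgebraicClosure K) n).topologicalClosure,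
        σ x = x) ↔
      ∃ L : IntermediateField K (AlgebraicClosure K),
        FiniteDimensional K L ∧ IsGalois K L ∧ x ∈ L ∧
          derivedSeries (L ≃ₐ[K] L) n = ⊥ := by
  constructor
  · intro h
    have hint : IsIntegral K x := Algebra.IsIntegral.isIntegral x
    haveI : FiniteDimensional K K⟮x⟯ := IntermediateField.adjoin.finiteDimensional hint
    set M : IntermediateField K (AlgebraicClosure K) :=
      normalClosure K K⟮x⟯ (AlgebraicClosure K) with hMdef
    have hxM : x ∈ M :=
      K⟮x⟯.le_normalClosure (IntermediateField.mem_adjoin_simple_self K x)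
    haveI : IsGalois K M := ⟨⟩
    set G := (M ≃ₐ[K] M) with hGdef
    have hf : Function.Surjective
        (AlgEquiv.restrictNormalHom M :
          (AlgebraicClosure K ≃ₐ[K] AlgebraicClosure K) →* G) :=
      AlgEquiv.restrictNormalHom_surjective (AlgebraicClosure K)
    haveI : (derivedSeries G n).Normal := derivedSeries_normal G n
    set E : IntermediateField K M := IntermediateField.fixedField (derivedSeries G n) with hEdef
    have hxE : (⟨x, hxM⟩ : M) ∈ E := by
      rintro ⟨τ, hτ⟩
      obtain ⟨σ, hσ, rfl⟩ := (derivedSeries_le_map_derivedSeries hf n) hτ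
      have hfix : σ x = x := h σ ((derivedSeries _ n).le_topologicalClosure hσ)
      have key : (AlgEquiv.restrictNormalHom M σ) (⟨x, hxM⟩ : M) = ⟨x, hxM⟩ := by
        apply Subtype.val_injective
        have hc := AlgEquiv.restrictNormalHom_apply M σ (⟨x, hxM⟩ : M)
        rw [hc]
        exact hfix
      exact key
    haveI : IsGalois K ↥E := IsGalois.of_fixedField_normal_subgroup (derivedSeries G n)
    have hkerE : derivedSeries G n ≤ E.fixingSubgroup := (le_iff_le _ _).mp le_rfl
    have hEder : derivedSeries (↥E ≃ₐ[K] ↥E) n = ⊥ := by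
      have hsurjE : Function.Surjective
          (AlgEquiv.restrictNormalHom ↥E : G →* (↥E ≃ₐ[K] ↥E)) :=
        AlgEquiv.restrictNormalHom_surjective M
      refine le_bot_iff.mp ?_
      refine (derivedSeries_le_map_derivedSeries hsurjE n).trans ?_
      rw [Subgroup.map_le_iff_le_comap]
      intro τ hτ
      have hfixE : ∀ y ∈ E, τ y = y := (E.mem_fixingSubgroup_iff τ).mp (hkerE hτ)
      simp only [Subgroup.mem_comap]
      have h1 : (AlgEquiv.restrictNormalHom ↥E : G →* (↥E ≃ₐ[K] ↥E)) τ = 1 := by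
        ext y
        have hw : (AlgEquiv.restrictNormalHom ↥E : G →* (↥E ≃ₐ[K] ↥E)) τ y = y :=
          Subtype.val_injective
            ((AlgEquiv.restrictNormalHom_apply E τ y).trans (hfixE y.1 y.2))
        rw [hw, AlgEquiv.one_apply]
      rw [h1]
      exact Subgroup.one_mem _
    refine ⟨IntermediateField.lift E, ?_, ?_, ?_, ?_⟩
    · exact (IntermediateField.liftAlgEquiv E).toLinearEquiv.finiteDimensional
    · exact IsGalois.of_algEquiv (IntermediateField.liftAlgEquiv E)
    · exact (IntermediateField.mem_lift (⟨x, hxM⟩ : M)).mpr hxE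
    · have hmeq := (AlgEquiv.autCongr (IntermediateField.liftAlgEquiv E) :
        (↥E ≃ₐ[K] ↥E) ≃* (↥(IntermediateField.lift E) ≃ₐ[K] ↥(IntermediateField.lift E)))
      calc derivedSeries (↥(IntermediateField.lift E) ≃ₐ[K] ↥(IntermediateField.lift E)) n
          = Subgroup.map hmeq.toMonoidHom (derivedSeries (↥E ≃ₐ[K] ↥E) n) :=
            (map_derivedSeries_eq hmeq.surjective n).symm
        _ = ⊥ := by rw [hEder, Subgroup.map_bot]
  · rintro ⟨L, hfin, hgal, hxL, hder⟩ σ hσ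
    have key : derivedSeries (AlgebraicClosure K ≃ₐ[K] AlgebraicClosure K) n
        ≤ L.fixingSubgroup := by
      intro τ hτ
      have hmem : (AlgEquiv.restrictNormalHom L :
            (AlgebraicClosure K ≃ₐ[K] AlgebraicClosure K) →* (L ≃ₐ[K] L)) τ
          ∈ derivedSeries (L ≃ₐ[K] L) n :=
        map_derivedSeries_le_derivedSeries _ n ⟨τ, hτ, rfl⟩
      rw [hder, Subgroup.mem_bot] at hmem
      rw [IntermediateField.mem_fixingSubgroup_iff]
      intro y hy
      have hc := AlgEquiv.restrictNormalHom_apply L τ (⟨y, hy⟩ : L)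
      rw [hmem] at hc
      simpa using hc.symm
    have hcl : (derivedSeries (AlgebraicClosure K ≃ₐ[K] AlgebraicClosure K) n).topologicalClosure
        ≤ L.fixingSubgroup :=
      Subgroup.topologicalClosure_minimal _ key L.fixingSubgroup_isClosed
    exact (IntermediateField.mem_fixingSubgroup_iff L σ).mp (hcl hσ) _ hxL
end
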